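/- Let P be a subset of the Euclidean plane and s, t ∈ P. Suppose (s*, t*) is a min-max optimal pair: s*, t* ∈ P, segment ℝ s* t* ⊆ P, and for every p, q ∈ P with segment ℝ p q ⊆ P one has max(d_P(s, s*), d_P(t, t*)) ≤ max(d_P(s, p), d_P(t, q)). Suppose moreover that d_P(s, s*) < ∞, d_P(t, t*) < ∞, and that the segment from s* to t* is contained in the topological interior of P. Then s* = s and t* = t (so s and t are themselves mutually visible in P). -/

import Mathlib

/-!
Shorten the two geodesics: if `s* ≠ s`, a nearly shortest path from `s` to `s*` passes through
points `p` arbitrarily close to `s*` with `d_P(s, p) < d_P(s, s*)`, and likewise for `t*`. Since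
the segment `s* t*` is a compact subset of the open set `int P`, some `ε`-thickening of it still
lies in `P`, and this thickening is convex; so for `p`, `q` within `ε` of `s*`, `t*` the segment
`p q` lies in `P`, and the pair `(p, q)` beats `(s*, t*)` in the min-max objective.
-/

open scoped ENNReal

noncomputable abbrev E2 : Type := EuclideanSpace ℝ (Fin 2)

/-- The geodesic (intrinsic) distance in `P`: the infimum of path lengths
(`eVariationOn γ Set.univ`) over continuous paths `γ : [0,1] → E` staying in `P`
from `x` to `y`; `∞` if no such finite-length path exists. -/
noncomputable def geoDist (P : Set E2) (x y : E2) : ℝ≥0∞ :=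
  sInf { l : ℝ≥0∞ | ∃ γ : Set.Icc (0:ℝ) 1 → E2,
    Continuous γ ∧ Set.range γ ⊆ P ∧
    γ ⟨0, by norm_num⟩ = x ∧ γ ⟨1, by norm_num⟩ = y ∧
    eVariationOn γ Set.univ = l }

open Set

lemma edist_le_geoDist {P : Set E2} {x y : E2} : edist x y ≤ geoDist P x y := by
  refine le_sInf ?_
  rintro l ⟨γ, -, -, rfl, rfl, rfl⟩
  exact eVariationOn.edist_le γ (mem_univ _) (mem_univ _)

lemma geoDist_self {P : Set E2} {x : E2} (hx : x ∈ P) : geoDist P x x = 0 := by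
  refine le_antisymm (sInf_le ⟨fun _ => x, continuous_const, ?_, rfl, rfl, ?_⟩) bot_le
  · exact range_subset_iff.2 fun _ => hx
  · exact eVariationOn.constant_on (by simp)

section PathsInUnitInterval

variable {P : Set E2} {γ : Icc (0 : ℝ) 1 → E2}

lemma geoDist_le_eVariationOn (hγ : Continuous γ) (hγP : range γ ⊆ P) :
    geoDist P (γ 0) (γ 1) ≤ eVariationOn γ univ :=
  sInf_le ⟨γ, hγ, hγP, rfl, rfl, rfl⟩

lemma geoDist_le_eVariationOn_Icc_zero (hγ : Continuous γ) (hγP : range γ ⊆ P)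
    (u : Icc (0 : ℝ) 1) : geoDist P (γ 0) (γ u) ≤ eVariationOn γ (Icc 0 u) := by
  have hmono : MonotoneOn (fun v => min v u) univ := fun _ _ _ _ h => min_le_min_right u h
  have himage : (fun v => min v u) '' univ = Icc 0 u := by
    ext w
    refine ⟨?_, fun hw => ⟨w, mem_univ _, min_eq_left hw.2⟩⟩
    rintro ⟨v, -, rfl⟩
    exact ⟨le_min v.2.1 u.2.1, min_le_right _ _⟩
  have hcont : Continuous fun v : Icc (0 : ℝ) 1 => min v u := continuous_id.min continuous_const
  have h := geoDist_le_eVariationOn (P := P) (hγ.comp hcont)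
    ((range_comp_subset_range _ γ).trans hγP)
  rwa [eVariationOn.comp_eq_of_monotoneOn γ _ hmono, himage, Function.comp_apply,
    Function.comp_apply, min_eq_left unitInterval.nonneg',
    min_eq_right unitInterval.le_one'] at h

lemma eVariationOn_Icc_zero_add_Icc_one (u : Icc (0 : ℝ) 1) :
    eVariationOn γ (Icc 0 u) + eVariationOn γ (Icc u 1) = eVariationOn γ univ := by
  have hunit : Icc (0 : Icc (0 : ℝ) 1) 1 = univ :=
    eq_univ_of_forall fun _ => ⟨unitInterval.nonneg', unitInterval.le_one'⟩
  simpa only [univ_inter, hunit] using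
    eVariationOn.Icc_add_Icc γ unitInterval.nonneg' unitInterval.le_one' (mem_univ u)

end PathsInUnitInterval

/-- Cut a path from `x` to `y` of length `< d_P(x, y) + c` at a point `p` with `|p - y| = c`:
the remaining piece has length `≥ c`, so the first one is shorter than `d_P(x, y)`. -/
lemma exists_dist_lt_geoDist_lt {P : Set E2} {x y : E2} (hxy : x ≠ y) (hfin : geoDist P x y < ⊤)
    {ε : ℝ} (hε : 0 < ε) : ∃ p ∈ P, dist p y < ε ∧ geoDist P x p < geoDist P x y := by
  set c := min (ε / 2) (dist x y)
  have hc : 0 < c := lt_min (half_pos hε) (dist_pos.2 hxy)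
  obtain ⟨_, ⟨γ, hγ, hγP, hγ0, hγ1, rfl⟩, hlen⟩ :=
    sInf_lt_iff.1 (ENNReal.lt_add_right hfin.ne (ENNReal.ofReal_pos.2 hc).ne')
  change γ 0 = x at hγ0
  change γ 1 = y at hγ1
  subst hγ0 hγ1
  obtain ⟨u, hu⟩ : ∃ u, dist (γ u) (γ 1) = c := by
    refine intermediate_value_univ 1 0 (hγ.dist continuous_const) ?_
    simpa only [dist_self] using ⟨hc.le, min_le_right _ _⟩
  have htail : ENNReal.ofReal c ≤ eVariationOn γ (Icc u 1) := by
    rw [← hu, ← edist_dist]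
    exact eVariationOn.edist_le γ ⟨le_rfl, u.2.2⟩ ⟨u.2.2, le_rfl⟩
  refine ⟨γ u, hγP (mem_range_self u),
    hu.trans_lt ((min_le_left _ _).trans_lt (half_lt_self hε)), (ENNReal.add_lt_add_iff_right (ENNReal.ofReal_ne_top (r := c))).1 ?_⟩
  calc geoDist P (γ 0) (γ u) + ENNReal.ofReal c
      ≤ eVariationOn γ (Icc 0 u) + eVariationOn γ (Icc u 1) :=
        add_le_add (geoDist_le_eVariationOn_Icc_zero hγ hγP u) htail
    _ = eVariationOn γ univ := eVariationOn_Icc_zero_add_Icc_one u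
    _ < _ := hlen

lemma exists_dist_lt_geoDist_lt_of_le {P : Set E2} {x y : E2} (hx : x ∈ P)
    (hfin : geoDist P x y < ⊤) {M : ℝ≥0∞} (hM : 0 < M) (hyM : geoDist P x y ≤ M)
    {ε : ℝ} (hε : 0 < ε) : ∃ p ∈ P, dist p y < ε ∧ geoDist P x p < M := by
  obtain rfl | hxy := eq_or_ne x y
  · exact ⟨x, hx, by rwa [dist_self], by rwa [geoDist_self hx]⟩
  · obtain ⟨p, hp, hpy, hlt⟩ := exists_dist_lt_geoDist_lt hxy hfin hε
    exact ⟨p, hp, hpy, hlt.trans_le hyM⟩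

lemma segment_subset_thickening_segment {F : Type*} [SeminormedAddCommGroup F] [NormedSpace ℝ F]
    {a b p q : F} {ε : ℝ} (hp : dist p a < ε) (hq : dist q b < ε) :
    segment ℝ p q ⊆ Metric.thickening ε (segment ℝ a b) :=
  ((convex_segment a b).thickening ε).segment_subset
    (Metric.mem_thickening_iff.2 ⟨a, left_mem_segment ℝ a b, hp⟩)
    (Metric.mem_thickening_iff.2 ⟨b, right_mem_segment ℝ a b, hq⟩)

theorem minmax_optimal_segment_meets_frontier_general (P : Set E2) (s t : E2)
    (hs : s ∈ P) (ht : t ∈ P) (sStar tStar : E2)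
    (hopt : ∀ p q : E2, p ∈ P → q ∈ P → segment ℝ p q ⊆ P →
      max (geoDist P s sStar) (geoDist P t tStar) ≤ max (geoDist P s p) (geoDist P t q))
    (hsfin : geoDist P s sStar < ⊤) (htfin : geoDist P t tStar < ⊤)
    (hint : segment ℝ sStar tStar ⊆ interior P) :
    sStar = s ∧ tStar = t := by
  by_contra hne
  have hM : 0 < max (geoDist P s sStar) (geoDist P t tStar) := by
    rcases not_and_or.1 hne with h | h
    · exact (edist_pos.2 (Ne.symm h)).trans_le (edist_le_geoDist.trans (le_max_left _ _))
    · exact (edist_pos.2 (Ne.symm h)).trans_le (edist_le_geoDist.trans (le_max_right _ _))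
  have hcompact : IsCompact (segment ℝ sStar tStar) := by
    simpa only [convexHull_pair] using (toFinite {sStar, tStar}).isCompact_convexHull (𝕜 := ℝ)
  obtain ⟨ε, hε, hthick⟩ := hcompact.exists_thickening_subset_open isOpen_interior hint
  obtain ⟨p, hp, hpd, hpM⟩ := exists_dist_lt_geoDist_lt_of_le hs hsfin hM (le_max_left _ _) hε
  obtain ⟨q, hq, hqd, hqM⟩ := exists_dist_lt_geoDist_lt_of_le ht htfin hM (le_max_right _ _) hε
  have hpq : segment ℝ p q ⊆ P :=
    ((segment_subset_thickening_segment hpd hqd).trans hthick).trans interior_subset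
  exact (hopt p q hp hq hpq).not_gt (max_lt hpM hqM)

/-- If a min-max optimal pair (at finite geodesic distance) is joined by a segment
avoiding the frontier of `P` (i.e., lying in the interior of `P`), then the optimal
pair is `(s, t)` itself, so `s` and `t` see each other. -/
theorem minmax_optimal_segment_meets_frontier (P : Set E2) (s t : E2)
    (hs : s ∈ P) (ht : t ∈ P) (sStar tStar : E2)
    (hsStar : sStar ∈ P) (htStar : tStar ∈ P)
    (hseg : segment ℝ sStar tStar ⊆ P)
    (hopt : ∀ p q : E2, p ∈ P → q ∈ P → segment ℝ p q ⊆ P →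
      max (geoDist P s sStar) (geoDist P t tStar) ≤ max (geoDist P s p) (geoDist P t q))
    (hsfin : geoDist P s sStar < ⊤) (htfin : geoDist P t tStar < ⊤)
    (hint : segment ℝ sStar tStar ⊆ interior P) :
    sStar = s ∧ tStar = t :=
  minmax_optimal_segment_meets_frontier_general P s t hs ht sStar tStar hopt hsfin htfin hint
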